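/- If a linear map A : V → W between vector spaces with nondegenerate symmetric bilinear forms of the same signature satisfies: A is injective, and for every v ∈ V with ⟨v,v⟩ ≠ 0 and every u with ⟨u,v⟩ = 0 one has ⟨Av,Au⟩ = 0, then A is a conformal linear map, i.e. there exists a nonzero constant c with ⟨Av,Au⟩ = c⟨v,u⟩ for all u,v ∈ V. -/

import Mathlib

/-!
Pull `C` back along `A` to the symmetric form `D v u = ⟨Av, Au⟩` on `V`. For a non-null `v`,
the hypothesis says that the functional `D v` vanishes on the hyperplane `v^⊥ = ker (B v)`, so
`D v = λ(v) • B v` with `λ(v) = D v v / B v v`. Symmetry of `D` and `B` gives `λ(v) = λ(w)`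
whenever `B v w ≠ 0`, and any two non-null vectors are linked through a third one; null vectors
are differences of non-null ones, so `D = λ • B`. Finally `λ ≠ 0`, because equal dimensions
make `A` surjective and `C` is nondegenerate.
-/

namespace LinearMap.BilinForm

variable {K V : Type*} [Field K] [AddCommGroup V] [Module K V] {B D : LinearMap.BilinForm K V}

theorem apply_eq_div_mul_of_forall_isOrtho (hB : B.IsSymm)
    (hDB : ∀ v, B v v ≠ 0 → ∀ u, B u v = 0 → D v u = 0) {v : V} (hv : B v v ≠ 0) (u : V) :
    D v u = D v v / B v v * B v u := by
  have hperp : B (u - (B u v / B v v) • v) v = 0 := by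
    simp only [map_sub, map_smul, LinearMap.sub_apply, LinearMap.smul_apply, smul_eq_mul]
    field_simp
    ring
  have h := hDB v hv _ hperp
  simp only [map_sub, map_smul, smul_eq_mul, hB.eq u v] at h
  linear_combination h

variable (hB : B.IsSymm) (hD : D.IsSymm) (hDB : ∀ v, B v v ≠ 0 → ∀ u, B u v = 0 → D v u = 0)
include hB hD hDB

theorem div_eq_div_of_forall_isOrtho_of_apply_ne_zero {v w : V} (hv : B v v ≠ 0) (hw : B w w ≠ 0)
    (hvw : B v w ≠ 0) : D v v / B v v = D w w / B w w := by
  refine mul_right_cancel₀ hvw ?_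
  rw [← apply_eq_div_mul_of_forall_isOrtho hB hDB hv, hD.eq v w, hB.eq v w,
    ← apply_eq_div_mul_of_forall_isOrtho hB hDB hw]

theorem div_eq_div_of_forall_isOrtho [CharZero K] {v w : V} (hv : B v v ≠ 0) (hw : B w w ≠ 0) :
    D v v / B v v = D w w / B w w := by
  by_cases hvw : B v w = 0
  swap
  · exact div_eq_div_of_forall_isOrtho_of_apply_ne_zero hB hD hDB hv hw hvw
  have hexpand (t : K) : B (v + t • w) (v + t • w) = B v v + t ^ 2 * B w w := by
    simp only [map_add, map_smul, LinearMap.add_apply, LinearMap.smul_apply, smul_eq_mul, hvw,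
      hB.eq w v]
    ring
  -- `t = 1` and `t = 2` cannot both make `v + t • w` null, since `B v v + B w w = 0` and
  -- `B v v + 4 B w w = 0` would force `B w w = 0`.
  obtain ⟨t, ht, hz⟩ : ∃ t : K, t ≠ 0 ∧ B (v + t • w) (v + t • w) ≠ 0 := by
    by_contra! h
    have h1 := h 1 one_ne_zero
    have h2 := h 2 two_ne_zero
    rw [hexpand] at h1 h2
    exact hw (by linear_combination (h2 - h1) / 3)
  have hvz : B v (v + t • w) ≠ 0 := by simpa [hvw] using hv
  have hwz : B w (v + t • w) ≠ 0 := by simpa [hB.eq w v, hvw, ht] using hw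
  rw [div_eq_div_of_forall_isOrtho_of_apply_ne_zero hB hD hDB hv hz hvz,
    div_eq_div_of_forall_isOrtho_of_apply_ne_zero hB hD hDB hw hz hwz]

theorem eq_smul_of_forall_isOrtho [CharZero K] {v₀ : V} (hv₀ : B v₀ v₀ ≠ 0) :
    D = (D v₀ v₀ / B v₀ v₀) • B := by
  set c := D v₀ v₀ / B v₀ v₀
  have hnonnull {v : V} (hv : B v v ≠ 0) (u : V) : D v u = c * B v u := by
    rw [apply_eq_div_mul_of_forall_isOrtho hB hDB hv, div_eq_div_of_forall_isOrtho hB hD hDB hv hv₀]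
  ext v u
  by_cases hv : B v v = 0
  swap
  · exact hnonnull hv u
  -- `v + v₀` and `v - v₀` cannot both be null: their values under `B` add up to `2 B v₀ v₀`.
  obtain ⟨s, hsv⟩ : ∃ s : K, B (v + s • v₀) (v + s • v₀) ≠ 0 := by
    by_contra! h
    have h1 := h 1
    have h2 := h (-1)
    simp only [map_add, map_smul, LinearMap.add_apply, LinearMap.smul_apply, smul_eq_mul, hv,
      hB.eq v₀ v] at h1 h2
    exact hv₀ (by linear_combination (h1 + h2) / 2)
  have h := hnonnull hsv u
  simp only [map_add, map_smul, LinearMap.add_apply, LinearMap.smul_apply, smul_eq_mul,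
    hnonnull hv₀] at h
  simp only [LinearMap.smul_apply, smul_eq_mul]
  linear_combination h

end LinearMap.BilinForm

theorem stmt3 {V W : Type*} [AddCommGroup V] [Module ℝ V] [AddCommGroup W] [Module ℝ W]
    [FiniteDimensional ℝ V] [FiniteDimensional ℝ W]
    (n : ℕ)
    (hdimV : Module.finrank ℝ V = n) (hdimW : Module.finrank ℝ W = n)
    (B : LinearMap.BilinForm ℝ V) (C : LinearMap.BilinForm ℝ W)
    (hBsymm : ∀ x y, B x y = B y x) (hCsymm : ∀ x y, C x y = C y x)
    (hBnd : ∀ x, (∀ y, B x y = 0) → x = 0)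
    (hCnd : ∀ x, (∀ y, C x y = 0) → x = 0)
    (A : V →ₗ[ℝ] W) (hA : Function.Injective A)
    (hperp : ∀ v : V, B v v ≠ 0 → ∀ u : V, B u v = 0 → C (A v) (A u) = 0) :
    ∃ c : ℝ, c ≠ 0 ∧ ∀ u v : V, C (A v) (A u) = c * B v u := by
  by_cases hB0 : B = 0
  · have hV (x : V) : x = 0 := hBnd x (by simp [hB0])
    exact ⟨1, one_ne_zero, fun u v => by simp [hV u, hV v]⟩
  obtain ⟨v₀, hv₀⟩ := LinearMap.BilinForm.exists_bilinForm_self_ne_zero hB0 ⟨hBsymm⟩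
  obtain ⟨c, hDB⟩ : ∃ c, C.compl₁₂ A A = c • B :=
    ⟨_, LinearMap.BilinForm.eq_smul_of_forall_isOrtho ⟨hBsymm⟩
      ⟨fun x y => hCsymm (A x) (A y)⟩ hperp hv₀⟩
  refine ⟨c, ?_, fun u v => LinearMap.congr_fun₂ hDB v u⟩
  rintro rfl
  have hsurj : Function.Surjective A :=
    (LinearMap.injective_iff_surjective_of_finrank_eq_finrank (hdimV.trans hdimW.symm)).mp hA
  have hAv₀ : A v₀ = 0 := hCnd _ fun w => by
    obtain ⟨u, rfl⟩ := hsurj w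
    simpa using LinearMap.congr_fun₂ hDB v₀ u
  exact hv₀ (by simp [hA (hAv₀.trans (map_zero A).symm)])
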